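/- Let X be a finite nonempty set and U a nonempty compact topological space, and let 𝒫(X) be the set of probability vectors on X with the total variation norm. Let β, K₁, L₁ ≥ 0 with βK₁ < 2, and set L̄ = L₁/(1 − βK₁/2). Let C : X × U × 𝒫(X) → ℝ satisfy |C(x,u,μ) − C(x,u,μ̃)| ≤ 2L₁·‖μ − μ̃‖_TV for all x, u, μ, μ̃; let P : X × U × 𝒫(X) → 𝒫(X) satisfy ‖P(·|x,u,μ) − P(·|x,u,μ̃)‖_TV ≤ K₁·‖μ − μ̃‖_TV for all x, u, μ, μ̃; and let Ω : U → ℝ be arbitrary. Let Q, Q̃ : X × U → ℝ be continuous in u, with the minimum function of Q̃ satisfying |min_{v ∈ U} Q̃(y,v) − min_{v ∈ U} Q̃(y′,v)| ≤ L̄ for all y, y′ ∈ X. Define H(Q,μ)(x,u) = C(x,u,μ) + Ω(u) + β·Σ_{y ∈ X} (min_{v ∈ U} Q(y,v))·P(y|x,u,μ). Then for all μ, μ̃ ∈ 𝒫(X): sup_{(x,u) ∈ X × U} |H(Q,μ)(x,u) − H(Q̃,μ̃)(x,u)| ≤ 2L̄·‖μ − μ̃‖_TV + β·sup_{(x,u)}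 |Q(x,u) − Q̃(x,u)|. -/
import Mathlib


/-- One-step Lipschitz estimate for the regularized finite-horizon Bellman operator in
the state-measure argument (Lemma 3.5):
`sup_{(x,u)} |H(Q,μ)(x,u) - H(Q̃,μ̃)(x,u)| ≤ 2L̄ ‖μ - μ̃‖_TV + β sup_{(x,u)} |Q - Q̃|`. -/
theorem stmt16 {X U : Type*} [Fintype X] [Nonempty X]
    [TopologicalSpace U] [CompactSpace U] [Nonempty U]
    (β K1 L1 : ℝ) (hβ : 0 ≤ β) (hK1 : 0 ≤ K1) (hL1 : 0 ≤ L1) (hβK : β * K1 < 2)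
    (C : X → U → (X → ℝ) → ℝ) (P : X → U → (X → ℝ) → X → ℝ) (Ω : U → ℝ)
    (Q Qt : X → U → ℝ)
    (hP : ∀ x u μ, μ ∈ stdSimplex ℝ X → P x u μ ∈ stdSimplex ℝ X)
    (hC : ∀ x u μ μ', μ ∈ stdSimplex ℝ X → μ' ∈ stdSimplex ℝ X →
      |C x u μ - C x u μ'| ≤ 2 * L1 * ((1 / 2) * ∑ y, |μ y - μ' y|))
    (hPTV : ∀ x u μ μ', μ ∈ stdSimplex ℝ X → μ' ∈ stdSimplex ℝ X →
      (1 / 2) * ∑ y, |P x u μ y - P x u μ' y| ≤ K1 * ((1 / 2) * ∑ y, |μ y - μ' y|))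
    (hQcont : ∀ x, Continuous (Q x)) (hQtcont : ∀ x, Continuous (Qt x))
    (hQtosc : ∀ y y', |(⨅ v, Qt y v) - (⨅ v, Qt y' v)| ≤ L1 / (1 - β * K1 / 2)) :
    ∀ μ μ' : X → ℝ, μ ∈ stdSimplex ℝ X → μ' ∈ stdSimplex ℝ X → ∀ x u,
      |(C x u μ + Ω u + β * ∑ y, (⨅ v, Q y v) * P x u μ y)
          - (C x u μ' + Ω u + β * ∑ y, (⨅ v, Qt y v) * P x u μ' y)|
        ≤ 2 * (L1 / (1 - β * K1 / 2)) * ((1 / 2) * ∑ y, |μ y - μ' y|)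
          + β * ⨆ q : X × U, |Q q.1 q.2 - Qt q.1 q.2| := by
  intro μ μ' hμ hμ' x u
  have hd : 0 < 1 - β * K1 / 2 := by linarith
  set Lb := L1 / (1 - β * K1 / 2) with hLb
  have hLbnn : 0 ≤ Lb := div_nonneg hL1 hd.le
  have hLbeq : Lb * (1 - β * K1 / 2) = L1 := div_mul_cancel₀ L1 hd.ne'
  have hTV : 0 ≤ (1 / 2) * ∑ y, |μ y - μ' y| := by positivity
  -- bounded below ranges for the infima
  have hbQ : ∀ y, BddBelow (Set.range (Q y)) := fun y => by
    have := (isCompact_univ.image (hQcont y)).bddBelow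
    rwa [Set.image_univ] at this
  have hbQt : ∀ y, BddBelow (Set.range (Qt y)) := fun y => by
    have := (isCompact_univ.image (hQtcont y)).bddBelow
    rwa [Set.image_univ] at this
  -- bddAbove of the sup over pairs
  have hBy : ∀ y : X, ∃ B, ∀ v, |Q y v - Qt y v| ≤ B := by
    intro y
    have hc : Continuous fun v => |Q y v - Qt y v| := ((hQcont y).sub (hQtcont y)).abs
    have h2 := (isCompact_univ.image hc).bddAbove
    rw [Set.image_univ] at h2
    obtain ⟨Bv, hBv⟩ := h2
    exact ⟨Bv, fun v => hBv (Set.mem_range_self v)⟩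
  choose B hB using hBy
  have hne : (Finset.univ : Finset X).Nonempty := Finset.univ_nonempty
  have hbdd : BddAbove (Set.range fun q : X × U => |Q q.1 q.2 - Qt q.1 q.2|) := by
    refine ⟨Finset.univ.sup' hne B, ?_⟩
    rintro _ ⟨q, rfl⟩
    exact (hB q.1 q.2).trans (Finset.le_sup' B (Finset.mem_univ q.1))
  set S := ⨆ q : X × U, |Q q.1 q.2 - Qt q.1 q.2| with hS
  have hkey : ∀ y v, |Q y v - Qt y v| ≤ S := fun y v =>
    le_ciSup hbdd ((y, v) : X × U)
  have hS0 : 0 ≤ S :=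
    (abs_nonneg _).trans (hkey (Classical.arbitrary X) (Classical.arbitrary U))
  -- comparison of minima
  have hmin : ∀ y, |(⨅ v, Q y v) - (⨅ v, Qt y v)| ≤ S := by
    intro y
    have h1 : (⨅ v, Q y v) - S ≤ ⨅ v, Qt y v := by
      refine le_ciInf fun v => ?_
      have ha := abs_le.mp (hkey y v)
      have hb := ciInf_le (hbQ y) v
      linarith [ha.1, ha.2]
    have h2 : (⨅ v, Qt y v) - S ≤ ⨅ v, Q y v := by
      refine le_ciInf fun v => ?_
      have ha := abs_le.mp (hkey y v)
      have hb := ciInf_le (hbQt y) v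
      linarith [ha.1, ha.2]
    rw [abs_sub_le_iff]
    constructor <;> linarith
  -- oscillation of m := min Qt
  set m : X → ℝ := fun y => ⨅ v, Qt y v with hm
  set Mx := Finset.univ.sup' hne m with hMx
  set mn := Finset.univ.inf' hne m with hmn
  obtain ⟨y1, -, hy1⟩ := Finset.exists_mem_eq_sup' hne m
  obtain ⟨y2, -, hy2⟩ := Finset.exists_mem_eq_inf' hne m
  have hoscd : Mx - mn ≤ Lb := by
    rw [hMx, hy1, hmn, hy2]
    have := hQtosc y1 y2
    calc m y1 - m y2 ≤ |m y1 - m y2| := le_abs_self _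
      _ ≤ Lb := this
  set c := (Mx + mn) / 2 with hc
  have hmc : ∀ y, |m y - c| ≤ Lb / 2 := by
    intro y
    have hup : m y ≤ Mx := Finset.le_sup' m (Finset.mem_univ y)
    have hlo : mn ≤ m y := Finset.inf'_le m (Finset.mem_univ y)
    rw [abs_le]
    constructor <;> [skip; skip] <;> simp only [hc] <;> linarith
  -- decomposition
  have hsum1 : ∑ y, P x u μ y = 1 := (hP x u μ hμ).2
  have hsum2 : ∑ y, P x u μ' y = 1 := (hP x u μ' hμ').2
  have hdecomp :
      (C x u μ + Ω u + β * ∑ y, (⨅ v, Q y v) * P x u μ y)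
        - (C x u μ' + Ω u + β * ∑ y, (⨅ v, Qt y v) * P x u μ' y)
      = (C x u μ - C x u μ')
        + β * (∑ y, ((⨅ v, Q y v) - m y) * P x u μ y)
        + β * (∑ y, (m y - c) * (P x u μ y - P x u μ' y)) := by
    have e1 : ∑ y, ((⨅ v, Q y v) - m y) * P x u μ y
        = (∑ y, (⨅ v, Q y v) * P x u μ y) - ∑ y, m y * P x u μ y := by
      rw [← Finset.sum_sub_distrib]
      exact Finset.sum_congr rfl fun y _ => by ring
    have e2 : ∑ y, (m y - c) * (P x u μ y - P x u μ' y)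
        = (∑ y, m y * P x u μ y) - (∑ y, m y * P x u μ' y)
          - c * (∑ y, P x u μ y) + c * (∑ y, P x u μ' y) := by
      simp only [Finset.mul_sum, ← Finset.sum_sub_distrib, ← Finset.sum_add_distrib]
      exact Finset.sum_congr rfl fun y _ => by ring
    rw [e1, e2, hsum1, hsum2]
    simp only [hm]
    ring
  rw [hdecomp]
  -- bound each term
  have hA : |C x u μ - C x u μ'| ≤ 2 * L1 * ((1 / 2) * ∑ y, |μ y - μ' y|) :=
    hC x u μ μ' hμ hμ'
  have hBnd : |∑ y, ((⨅ v, Q y v) - m y) * P x u μ y| ≤ S := by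
    calc |∑ y, ((⨅ v, Q y v) - m y) * P x u μ y|
        ≤ ∑ y, |((⨅ v, Q y v) - m y) * P x u μ y| := Finset.abs_sum_le_sum_abs _ _
      _ ≤ ∑ y, S * P x u μ y := by
          refine Finset.sum_le_sum fun y _ => ?_
          rw [abs_mul, abs_of_nonneg ((hP x u μ hμ).1 y)]
          exact mul_le_mul_of_nonneg_right (hmin y) ((hP x u μ hμ).1 y)
      _ = S := by rw [← Finset.mul_sum, hsum1, mul_one]
  have hD : |∑ y, (m y - c) * (P x u μ y - P x u μ' y)|
      ≤ Lb * (K1 * ((1 / 2) * ∑ y, |μ y - μ' y|)) := by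
    have h1 : |∑ y, (m y - c) * (P x u μ y - P x u μ' y)|
        ≤ (Lb / 2) * ∑ y, |P x u μ y - P x u μ' y| := by
      calc |∑ y, (m y - c) * (P x u μ y - P x u μ' y)|
          ≤ ∑ y, |(m y - c) * (P x u μ y - P x u μ' y)| := Finset.abs_sum_le_sum_abs _ _
        _ ≤ ∑ y, (Lb / 2) * |P x u μ y - P x u μ' y| := by
            refine Finset.sum_le_sum fun y _ => ?_
            rw [abs_mul]
            exact mul_le_mul_of_nonneg_right (hmc y) (abs_nonneg _)
        _ = (Lb / 2) * ∑ y, |P x u μ y - P x u μ' y| := by rw [Finset.mul_sum]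
    have h2 := hPTV x u μ μ' hμ hμ'
    nlinarith [h1, h2]
  calc |(C x u μ - C x u μ')
        + β * (∑ y, ((⨅ v, Q y v) - m y) * P x u μ y)
        + β * (∑ y, (m y - c) * (P x u μ y - P x u μ' y))|
      ≤ |C x u μ - C x u μ'|
        + β * |∑ y, ((⨅ v, Q y v) - m y) * P x u μ y|
        + β * |∑ y, (m y - c) * (P x u μ y - P x u μ' y)| := by
        calc _ ≤ |(C x u μ - C x u μ')
              + β * (∑ y, ((⨅ v, Q y v) - m y) * P x u μ y)|
              + |β * (∑ y, (m y - c) * (P x u μ y - P x u μ' y))| := abs_add_le _ _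
          _ ≤ _ := by
              rw [abs_mul, abs_of_nonneg hβ]
              have := abs_add_le (C x u μ - C x u μ')
                (β * (∑ y, ((⨅ v, Q y v) - m y) * P x u μ y))
              rw [abs_mul, abs_of_nonneg hβ] at this
              linarith
    _ ≤ 2 * L1 * ((1 / 2) * ∑ y, |μ y - μ' y|) + β * S
        + β * (Lb * (K1 * ((1 / 2) * ∑ y, |μ y - μ' y|))) := by
        have := mul_le_mul_of_nonneg_left hBnd hβ
        have := mul_le_mul_of_nonneg_left hD hβ
        linarith
    _ ≤ 2 * Lb * ((1 / 2) * ∑ y, |μ y - μ' y|) + β * S := by nlinarith [hLbeq, hTV]
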